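/- Let λ > 0, μ > 0, c > 0, α > 2 and define p_l(x) = (λ μ^α/(2πc Γ(α))) ∫_{‖x‖/c}^∞ e^{-(λ+μ)τ} τ^{α-1} exp((λ/c)√(c²τ² - ‖x‖²)) / √(c²τ² - ‖x‖²) dτ for x ∈ ℝ². Then ∫_{ℝ²} p_l(x) dx = 1 - (μ/(λ+μ))^α. -/

import Mathlib

open MeasureTheory Real Set

/-!
In polar coordinates the integral of `p_l` becomes `2π ∫∫ r k(r, τ) dτ dr` over `r, τ > 0`,
where the kernel `k` vanishes outside the light cone `r < cτ`. Swapping the integrals (everything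
is nonnegative), the radial integral is elementary:
`∫₀^{cτ} r e^{(λ/c)√(c²τ² - r²)} / √(c²τ² - r²) dr = (c/λ)(e^{λτ} - 1)`, with antiderivative
`-(c/λ) e^{(λ/c)√(c²τ² - r²)}`. The remaining τ-integral is a difference of two Gamma integrals,
`Γ(α)(μ^{-α} - (λ+μ)^{-α})`, and the prefactor turns it into `1 - (μ/(λ+μ))^α`.
-/

/-- For `q ≤ r ^ 2` the square root is `0` and `x / 0 = 0` makes the kernel vanish: this is the
light-cone cutoff that the lower limit `‖x‖ / c` expresses in the statement. -/
noncomputable def flightKernel (a q r : ℝ) : ℝ := exp (a * √(q - r ^ 2)) / √(q - r ^ 2)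

lemma flightKernel_nonneg (a q r : ℝ) : 0 ≤ flightKernel a q r := by
  unfold flightKernel; positivity

lemma flightKernel_of_le {a q r : ℝ} (h : q ≤ r ^ 2) : flightKernel a q r = 0 := by
  rw [flightKernel, sqrt_eq_zero'.2 (by linarith), div_zero]

lemma hasDerivAt_exp_sqrt_sub_sq {a q r : ℝ} (ha : a ≠ 0) (hr : r ^ 2 < q) :
    HasDerivAt (fun s => -a⁻¹ * exp (a * √(q - s ^ 2))) (r * flightKernel a q r) r := by
  have hpos : 0 < q - r ^ 2 := by linarith
  have hsqrt : HasDerivAt (fun s => √(q - s ^ 2)) (-(2 * r) / (2 * √(q - r ^ 2))) r := by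
    simpa using ((hasDerivAt_pow 2 r).const_sub q).sqrt hpos.ne'
  refine ((hsqrt.const_mul a).exp.const_mul (-a⁻¹)).congr_deriv ?_
  have hsqrt_ne : √(q - r ^ 2) ≠ 0 := (sqrt_pos.2 hpos).ne'
  rw [flightKernel]
  field_simp

lemma integrableOn_mul_flightKernel {a b : ℝ} (ha : a ≠ 0) :
    IntegrableOn (fun r => r * flightKernel a (b ^ 2) r) (Ioc 0 b) :=
  intervalIntegral.integrableOn_deriv_of_nonneg (by fun_prop)
    (fun r hr => hasDerivAt_exp_sqrt_sub_sq ha (by nlinarith [hr.1, hr.2]))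
    (fun r hr => mul_nonneg hr.1.le (flightKernel_nonneg _ _ _))

lemma integral_mul_flightKernel {a b : ℝ} (ha : a ≠ 0) (hb : 0 ≤ b) :
    ∫ r in (0)..b, r * flightKernel a (b ^ 2) r = (exp (a * b) - 1) / a := by
  rw [intervalIntegral.integral_eq_sub_of_hasDerivAt_of_le hb (by fun_prop)
    (fun r hr => hasDerivAt_exp_sqrt_sub_sq ha (by nlinarith [hr.1, hr.2]))
    ((intervalIntegrable_iff_integrableOn_Ioc_of_le hb).2 (integrableOn_mul_flightKernel ha))]
  simp only [sub_self, sqrt_zero, mul_zero, exp_zero, ne_eq, OfNat.ofNat_ne_zero,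
    not_false_eq_true, zero_pow, sub_zero, sqrt_sq hb]
  field_simp
  ring

lemma mul_flightKernel_sq_of_mem_sdiff {a b r : ℝ} (hb : 0 ≤ b) (hr : r ∈ Ioi 0 \ Ioc 0 b) :
    r * flightKernel a (b ^ 2) r = 0 := by
  have hbr : b < r := not_le.1 fun h => hr.2 ⟨hr.1, h⟩
  rw [flightKernel_of_le (pow_le_pow_left₀ hb hbr.le 2), mul_zero]

lemma integrableOn_Ioi_mul_flightKernel {a b : ℝ} (ha : a ≠ 0) (hb : 0 ≤ b) :
    IntegrableOn (fun r => r * flightKernel a (b ^ 2) r) (Ioi 0) :=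
  (integrableOn_mul_flightKernel ha).of_forall_sdiff_eq_zero measurableSet_Ioi
    fun _ hr => mul_flightKernel_sq_of_mem_sdiff hb hr

lemma integral_Ioi_mul_flightKernel {a b : ℝ} (ha : a ≠ 0) (hb : 0 ≤ b) :
    ∫ r in Ioi 0, r * flightKernel a (b ^ 2) r = (exp (a * b) - 1) / a := by
  rw [setIntegral_eq_of_subset_of_forall_sdiff_eq_zero measurableSet_Ioi Ioc_subset_Ioi_self
      fun _ hr => mul_flightKernel_sq_of_mem_sdiff hb hr,
    ← intervalIntegral.integral_of_le hb, integral_mul_flightKernel ha hb]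

lemma setIntegral_Ioi_div_mul_flightKernel {c r : ℝ} (hc : 0 < c) (hr : 0 ≤ r) (a : ℝ)
    (g : ℝ → ℝ) :
    ∫ τ in Ioi (r / c), g τ * flightKernel a (c ^ 2 * τ ^ 2) r
      = ∫ τ in Ioi 0, g τ * flightKernel a (c ^ 2 * τ ^ 2) r := by
  refine (setIntegral_eq_of_subset_of_forall_sdiff_eq_zero measurableSet_Ioi
    (Ioi_subset_Ioi (by positivity)) fun τ ⟨hτ, hτr⟩ => ?_).symm
  have hcτ : c * τ ≤ r := (le_div_iff₀' hc).1 (not_lt.1 hτr)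
  have hcτ0 : 0 ≤ c * τ := mul_nonneg hc.le (le_of_lt hτ)
  rw [flightKernel_of_le (by nlinarith), mul_zero]

lemma integral_Ioi_mul_integral_flightKernel {lam c : ℝ} {w : ℝ → ℝ} (hlam : lam ≠ 0)
    (hc : 0 < c) (hw : Measurable w) (hw0 : ∀ τ ∈ Ioi 0, 0 ≤ w τ)
    (hint : IntegrableOn (fun τ => w τ * (exp (lam * τ) - 1)) (Ioi 0)) :
    ∫ r in Ioi 0, r * ∫ τ in Ioi 0, w τ * flightKernel (lam / c) (c ^ 2 * τ ^ 2) r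
      = c / lam * ∫ τ in Ioi 0, w τ * (exp (lam * τ) - 1) := by
  set F : ℝ → ℝ → ℝ := fun r τ => r * (w τ * flightKernel (lam / c) (c ^ 2 * τ ^ 2) r)
  have slice : ∀ τ ∈ Ioi (0 : ℝ),
      IntegrableOn (F · τ) (Ioi 0) ∧
        ∫ r in Ioi 0, F r τ = c / lam * (w τ * (exp (lam * τ) - 1)) := by
    intro τ hτ
    have hcτ : 0 ≤ c * τ := mul_nonneg hc.le (le_of_lt hτ)
    simp only [F, mul_left_comm _ (w τ), ← mul_pow]
    refine ⟨(integrableOn_Ioi_mul_flightKernel (div_ne_zero hlam hc.ne') hcτ).const_mul _, ?_⟩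
    rw [integral_const_mul, integral_Ioi_mul_flightKernel (div_ne_zero hlam hc.ne') hcτ]
    field_simp
  have hmeas : Measurable (Function.uncurry F) := by
    simp only [F, flightKernel]
    fun_prop
  have hnorm : ∀ τ ∈ Ioi (0 : ℝ),
      ∫ r in Ioi 0, ‖F r τ‖ = c / lam * (w τ * (exp (lam * τ) - 1)) := by
    intro τ hτ
    rw [← (slice τ hτ).2]
    refine setIntegral_congr_fun measurableSet_Ioi fun r hr => norm_of_nonneg ?_
    exact mul_nonneg (le_of_lt hr) (mul_nonneg (hw0 τ hτ) (flightKernel_nonneg _ _ _))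
  have hF : Integrable (Function.uncurry F)
      ((volume.restrict (Ioi 0)).prod (volume.restrict (Ioi 0))) := by
    refine (integrable_prod_iff' hmeas.aestronglyMeasurable).2 ⟨?_, ?_⟩
    · exact (ae_restrict_mem measurableSet_Ioi).mono fun τ hτ => (slice τ hτ).1
    · exact IntegrableOn.congr_fun (hint.const_mul (c / lam))
        (fun τ hτ => (hnorm τ hτ).symm) measurableSet_Ioi
  calc ∫ r in Ioi 0, r * ∫ τ in Ioi 0, w τ * flightKernel (lam / c) (c ^ 2 * τ ^ 2) r
      = ∫ r in Ioi 0, ∫ τ in Ioi 0, F r τ := by simp only [F, integral_const_mul]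
    _ = ∫ τ in Ioi 0, ∫ r in Ioi 0, F r τ := integral_integral_swap hF
    _ = ∫ τ in Ioi 0, c / lam * (w τ * (exp (lam * τ) - 1)) :=
      setIntegral_congr_fun measurableSet_Ioi fun τ hτ => (slice τ hτ).2
    _ = c / lam * ∫ τ in Ioi 0, w τ * (exp (lam * τ) - 1) := integral_const_mul _ _

lemma integral_fun_norm_euclideanSpace_two {F : Type*} [NormedAddCommGroup F]
    [NormedSpace ℝ F] (f : ℝ → F) :
    ∫ x : EuclideanSpace ℝ (Fin 2), f ‖x‖ = (2 * π) • ∫ r in Ioi 0, r • f r := by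
  have hball : volume.real (Metric.ball (0 : EuclideanSpace ℝ (Fin 2)) 1) = π := by
    rw [measureReal_def, EuclideanSpace.volume_ball]
    norm_num [Gamma_two, sq_sqrt pi_nonneg, ENNReal.toReal_ofReal pi_nonneg]
  rw [integral_fun_norm_addHaar volume f, finrank_euclideanSpace_fin, hball,
    ← Nat.cast_smul_eq_nsmul ℝ, smul_smul]
  norm_num

lemma integrableOn_Ioi_rpow_mul_exp_neg_mul {α s : ℝ} (hα : 0 < α) (hs : 0 < s) :
    IntegrableOn (fun τ : ℝ => τ ^ (α - 1) * exp (-(s * τ))) (Ioi 0) := by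
  simpa using integrableOn_rpow_mul_exp_neg_mul_rpow (p := 1) (by linarith) one_pos hs

lemma exp_mul_rpow_mul_exp_sub_one (lam mu α τ : ℝ) :
    exp (-(lam + mu) * τ) * τ ^ (α - 1) * (exp (lam * τ) - 1)
      = τ ^ (α - 1) * exp (-(mu * τ)) - τ ^ (α - 1) * exp (-((lam + mu) * τ)) := by
  rw [mul_sub, mul_one, mul_right_comm, ← exp_add]
  ring_nf

lemma integrableOn_Ioi_exp_mul_rpow_mul_exp_sub_one {lam mu α : ℝ} (hlam : 0 ≤ lam)
    (hmu : 0 < mu) (hα : 0 < α) :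
    IntegrableOn (fun τ => exp (-(lam + mu) * τ) * τ ^ (α - 1) * (exp (lam * τ) - 1))
      (Ioi 0) := by
  simp only [exp_mul_rpow_mul_exp_sub_one]
  exact (integrableOn_Ioi_rpow_mul_exp_neg_mul hα hmu).sub
    (integrableOn_Ioi_rpow_mul_exp_neg_mul hα (by linarith))

lemma integral_Ioi_exp_mul_rpow_mul_exp_sub_one {lam mu α : ℝ} (hlam : 0 ≤ lam) (hmu : 0 < mu)
    (hα : 0 < α) :
    ∫ τ in Ioi 0, exp (-(lam + mu) * τ) * τ ^ (α - 1) * (exp (lam * τ) - 1)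
      = Gamma α * ((1 / mu) ^ α - (1 / (lam + mu)) ^ α) := by
  have hlm : 0 < lam + mu := by linarith
  simp only [exp_mul_rpow_mul_exp_sub_one]
  rw [integral_sub (integrableOn_Ioi_rpow_mul_exp_neg_mul hα hmu)
      (integrableOn_Ioi_rpow_mul_exp_neg_mul hα hlm),
    integral_rpow_mul_exp_neg_mul_Ioi hα hmu, integral_rpow_mul_exp_neg_mul_Ioi hα hlm]
  ring

theorem stmt9 (lam mu c α : ℝ) (hlam : 0 < lam) (hmu : 0 < mu) (hc : 0 < c) (hα : 2 < α) :
    ∫ x : EuclideanSpace ℝ (Fin 2),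
        (lam * mu ^ α / (2 * π * c * Real.Gamma α)) *
          ∫ τ in Ioi (‖x‖ / c),
            Real.exp (-(lam + mu) * τ) * τ ^ (α - 1) *
              (Real.exp ((lam / c) * Real.sqrt (c ^ 2 * τ ^ 2 - ‖x‖ ^ 2)) /
                Real.sqrt (c ^ 2 * τ ^ 2 - ‖x‖ ^ 2))
      = 1 - (mu / (lam + mu)) ^ α := by
  have hα0 : 0 < α := by linarith
  set C := lam * mu ^ α / (2 * π * c * Gamma α)
  set w : ℝ → ℝ := fun τ => exp (-(lam + mu) * τ) * τ ^ (α - 1)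
  have radial : ∀ r ∈ Ioi (0 : ℝ),
      r • (C * ∫ τ in Ioi (r / c), w τ * flightKernel (lam / c) (c ^ 2 * τ ^ 2) r)
        = C * (r * ∫ τ in Ioi 0, w τ * flightKernel (lam / c) (c ^ 2 * τ ^ 2) r) := by
    intro r hr
    rw [setIntegral_Ioi_div_mul_flightKernel hc (le_of_lt hr), smul_eq_mul, mul_left_comm]
  refine (integral_fun_norm_euclideanSpace_two
    fun r => C * ∫ τ in Ioi (r / c), w τ * flightKernel (lam / c) (c ^ 2 * τ ^ 2) r).trans ?_
  rw [setIntegral_congr_fun measurableSet_Ioi radial,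
    integral_const_mul, integral_Ioi_mul_integral_flightKernel hlam.ne' hc (by fun_prop)
      (fun τ hτ => mul_nonneg (exp_pos _).le (rpow_nonneg (le_of_lt hτ) _))
      (integrableOn_Ioi_exp_mul_rpow_mul_exp_sub_one hlam.le hmu hα0),
    integral_Ioi_exp_mul_rpow_mul_exp_sub_one hlam.le hmu hα0]
  have hlm : 0 < lam + mu := by linarith
  have hΓ : Gamma α ≠ 0 := (Gamma_pos_of_pos hα0).ne'
  have hμα : mu ^ α ≠ 0 := (rpow_pos_of_pos hmu α).ne'
  have hlmα : (lam + mu) ^ α ≠ 0 := (rpow_pos_of_pos hlm α).ne'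
  rw [div_rpow zero_le_one hmu.le, div_rpow zero_le_one hlm.le, div_rpow hmu.le hlm.le, one_rpow]
  have hπ : π ≠ 0 := pi_ne_zero
  simp only [C, smul_eq_mul]
  field_simp
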